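/- Let m > 0, n ≥ 1, and let c(n,P) ∈ [0,1) solve c = (|P|-c)/sqrt(m²n²+(|P|-c)²). Then the partial derivative of c(n,P) with respect to n equals −(1/n)(|P| − c(n,P)) · (1 + (m²n² + (|P|−c(n,P))²)^{3/2} / (m²n²))^{-1}. -/

import Mathlib

/-!
Squaring `c = (|P| - c) / √(m²n² + (|P| - c)²)` gives the polynomial relation
`(|P| - c)² (1 - c²) = c² m² n²`, which holds for all `n > 0`. Differentiating it in `n` gives `c'` as
a rational function of `n`, `c` and `|P| - c`; on the other hand `(m²n² + (|P| - c)²)^{3/2} = ((|P| - c) / c)³`,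
and after this substitution the two expressions agree modulo the squared relation.
-/

open Filter Topology

lemma sq_mul_eq_sq_of_eq_div_sqrt {x y X : ℝ} (hX : 0 < X) (h : y = x / √X) :
    y ^ 2 * X = x ^ 2 := by
  rw [h, div_pow, Real.sq_sqrt hX.le, div_mul_cancel₀ _ hX.ne']

lemma sub_pos_of_eq_div_sqrt {p y X : ℝ} (hp : 0 < p) (h : y = (p - y) / √X) :
    0 < p - y := by
  by_contra! hle
  have : y ≤ 0 := h ▸ div_nonpos_of_nonpos_of_nonneg hle (Real.sqrt_nonneg X)
  linarith

lemma mul_eq_of_hasDerivAt_of_implicit_relation {c : ℝ → ℝ} {c' p k n : ℝ}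
    (hderiv : HasDerivAt c c' n)
    (hrel : ∀ᶠ r in 𝓝 n, (p - c r) ^ 2 * (1 - c r ^ 2) = c r ^ 2 * (k * r ^ 2)) :
    c' * ((p - c n) * (1 - c n ^ 2) + (p - c n) ^ 2 * c n + c n * (k * n ^ 2)) =
      -(c n ^ 2 * k * n) := by
  have hres : HasDerivAt (fun r ↦ (p - c r) ^ 2 * (1 - c r ^ 2) - c r ^ 2 * (k * r ^ 2))
      ((2 * (p - c n) ^ 1 * (0 - c')) * (1 - c n ^ 2) + (p - c n) ^ 2 * (0 - 2 * c n ^ 1 * c')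
        - ((2 * c n ^ 1 * c') * (k * n ^ 2) + c n ^ 2 * (k * (2 * n ^ 1)))) n :=
    ((((hasDerivAt_const n p).sub hderiv).pow 2).mul ((hasDerivAt_const n 1).sub (hderiv.pow 2))).sub
      ((hderiv.pow 2).mul ((hasDerivAt_pow 2 n).const_mul k))
  have hzero : (fun r ↦ (p - c r) ^ 2 * (1 - c r ^ 2) - c r ^ 2 * (k * r ^ 2)) =ᶠ[𝓝 n] fun _ ↦ 0 :=
    hrel.mono fun r hr ↦ sub_eq_zero.mpr hr
  have := (hzero.hasDerivAt_iff.mp hres).unique (hasDerivAt_const n 0)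
  linear_combination (-1 / 2 : ℝ) * this

lemma eq_neg_mul_inv_of_mul_eq {s y k n c' : ℝ} (hs : 0 < s) (hy0 : 0 < y) (hy1 : y < 1)
    (hk : 0 < k) (hn : 0 < n) (hsq : y ^ 2 * (k * n ^ 2 + s ^ 2) = s ^ 2)
    (hlin : c' * (s * (1 - y ^ 2) + s ^ 2 * y + y * (k * n ^ 2)) = -(y ^ 2 * k * n)) :
    c' = -(1 / n) * s * (1 + (k * n ^ 2 + s ^ 2) ^ ((3 : ℝ) / 2) / (k * n ^ 2))⁻¹ := by
  have hD : 0 < s * (1 - y ^ 2) + s ^ 2 * y + y * (k * n ^ 2) := by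
    have : 0 < 1 - y ^ 2 := by nlinarith
    positivity
  have hsqrt : √(k * n ^ 2 + s ^ 2) = s / y := by
    rw [Real.sqrt_eq_iff_mul_self_eq_of_pos (div_pos hs hy0)]
    field_simp
    linear_combination -hsq
  have hpow : (k * n ^ 2 + s ^ 2) ^ ((3 : ℝ) / 2) = (s / y) ^ 3 := by
    rw [Real.rpow_div_two_eq_sqrt _ (by positivity), hsqrt]
    norm_cast
  rw [hpow]
  refine mul_right_cancel₀ hD.ne' (hlin.trans ?_)
  field_simp
  linear_combination (s - y) * hsq

theorem deriv_c_in_n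
    (d : ℕ) (m : ℝ) (hm : 0 < m) (n : ℝ) (hn : 1 ≤ n)
    (P : EuclideanSpace ℝ (Fin d)) (hP : P ≠ 0)
    (c : ℝ → ℝ) (c' : ℝ)
    (hc : ∀ r : ℝ, 0 < r → c r ∈ Set.Ico (0 : ℝ) 1 ∧
      c r = (‖P‖ - c r) / Real.sqrt (m ^ 2 * r ^ 2 + (‖P‖ - c r) ^ 2))
    (hderiv : HasDerivAt c c' n) :
    c' = -(1 / n) * (‖P‖ - c n) *
      (1 + (m ^ 2 * n ^ 2 + (‖P‖ - c n) ^ 2) ^ ((3 : ℝ) / 2) / (m ^ 2 * n ^ 2))⁻¹ := by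
  have hn0 : 0 < n := by linarith
  have hsq : ∀ r, 0 < r → c r ^ 2 * (m ^ 2 * r ^ 2 + (‖P‖ - c r) ^ 2) = (‖P‖ - c r) ^ 2 :=
    fun r hr ↦ sq_mul_eq_sq_of_eq_div_sqrt (by positivity) (hc r hr).2
  have hrel : ∀ᶠ r in 𝓝 n, (‖P‖ - c r) ^ 2 * (1 - c r ^ 2) = c r ^ 2 * (m ^ 2 * r ^ 2) := by
    filter_upwards [Ioi_mem_nhds hn0] with r hr
    linear_combination -hsq r hr
  obtain ⟨⟨hy0, hy1⟩, hfix⟩ := hc n hn0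
  have hs := sub_pos_of_eq_div_sqrt (norm_pos_iff.mpr hP) hfix
  have hy : 0 < c n := hfix ▸ div_pos hs (Real.sqrt_pos.mpr (by positivity))
  exact eq_neg_mul_inv_of_mul_eq hs hy hy1 (by positivity) hn0 (hsq n hn0)
    (mul_eq_of_hasDerivAt_of_implicit_relation hderiv hrel)
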